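/- arXiv:2006.11581 — 4 statements merged into one kernel-verified Lean document; each statement's English description precedes it below -/
import Mathlib

section
/- Let K(τ; z, x) = (2i(x - z)(x - z̄)/(z - z̄))^τ for z in the upper half-plane and x ∈ ℝ. Then the Fourier transform Jf(τ; x) = ∫_Λ K(τ; z, x) f(z) dμ(z) intertwines the action R(g)f(z) = f(z^[g]) with the principal series action: J(R(g)f)(τ; x) = Jf(τ; x^[g]) |a + xc|^{2τ}, for g = (a b; c d) ∈ SL(2,ℝ) and f smooth compactly supported on Λ. -/
open MeasureTheory Complex
open scoped ENNReal NNReal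

/-- The hyperbolic measure `dx dy / (4 y^2)` on the upper half-plane. -/
noncomputable def lobMeasure : Measure ℂ :=
  (volume.restrict {z : ℂ | 0 < z.im}).withDensity
    (fun z => ENNReal.ofReal (1 / (4 * z.im ^ 2)))

/-- The kernel `K(τ; z, x) = (2i(x-z)(x-z̄)/(z-z̄))^τ`. -/
noncomputable def lobK (τ z : ℂ) (x : ℝ) : ℂ :=
  (2 * Complex.I * ((x : ℂ) - z) * ((x : ℂ) - (starRingEnd ℂ) z)
    / (z - (starRingEnd ℂ) z)) ^ τ

/-- The Fourier transform on the Lobachevsky plane. -/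
noncomputable def lobJ (f : ℂ → ℂ) (τ : ℂ) (x : ℝ) : ℂ :=
  ∫ z, lobK τ z x * f z ∂lobMeasure


lemma denom_ne {p r : ℝ} (h : ¬(p = 0 ∧ r = 0)) {z : ℂ} (hz : 0 < z.im) :
    (p : ℂ) + z * r ≠ 0 := by
  intro h0
  rcases eq_or_ne r 0 with hr | hr
  · subst hr
    simp only [ofReal_zero, mul_zero, add_zero, ofReal_eq_zero] at h0
    exact h ⟨h0, rfl⟩
  · have := congrArg Complex.im h0
    simp [Complex.add_im, Complex.mul_im] at this
    rcases this with h1 | h1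
    · exact hz.ne' h1
    · exact hr h1

lemma im_moebius {p q r s : ℝ} (hdet : p * s - q * r = 1) {z : ℂ}
    (hden : (p : ℂ) + z * r ≠ 0) :
    (((q : ℂ) + z * s) / ((p : ℂ) + z * r)).im = z.im / normSq ((p : ℂ) + z * r) := by
  have hN : normSq ((p : ℂ) + z * r) ≠ 0 := by simpa using hden
  rw [Complex.div_im]
  simp only [Complex.add_im, Complex.add_re, Complex.mul_im, Complex.mul_re,
    Complex.ofReal_re, Complex.ofReal_im]
  field_simp
  ring_nf
  linear_combination z.im * hdet

lemma det_mul_complex (c : ℂ) :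
    LinearMap.det ((ContinuousLinearMap.smulRight (1 : ℂ →L[ℂ] ℂ) c).restrictScalars ℝ
      : ℂ →ₗ[ℝ] ℂ) = Complex.normSq c := by
  have : ((ContinuousLinearMap.smulRight (1 : ℂ →L[ℂ] ℂ) c).restrictScalars ℝ
      : ℂ →ₗ[ℝ] ℂ) = Algebra.lmul ℝ ℂ c := by
    ext w
    simp [mul_comm]
  rw [this, ← Algebra.norm_apply, Algebra.norm_complex_apply]

lemma lobK_eq (τ : ℂ) {z : ℂ} (hz : 0 < z.im) (x : ℝ) :
    lobK τ z x = ((normSq ((x : ℂ) - z) / z.im : ℝ) : ℂ) ^ τ := by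
  unfold lobK
  congr 1
  have h1 : ((x : ℂ) - (starRingEnd ℂ) z) = (starRingEnd ℂ) ((x : ℂ) - z) := by
    simp
  have h2 : z - (starRingEnd ℂ) z = (2 * z.im : ℝ) * Complex.I := Complex.sub_conj z
  rw [h2]
  have him : (z.im : ℂ) ≠ 0 := by exact_mod_cast hz.ne'
  rw [mul_assoc, h1, Complex.mul_conj]
  push_cast
  field_simp

lemma kernel_transform {a b c d : ℝ} (hdet : a * d - b * c = 1)
    (τ : ℂ) {z : ℂ} (hz : 0 < z.im) {x : ℝ} (hx : a + x * c ≠ 0) :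
    lobK τ z x = lobK τ (((b : ℂ) + z * d) / ((a : ℂ) + z * c)) ((b + x * d) / (a + x * c))
      * ((|a + x * c| : ℝ) : ℂ) ^ (2 * τ) := by
  have hdetC : (a : ℂ) * d - b * c = 1 := by exact_mod_cast hdet
  have hpr : ¬(a = 0 ∧ c = 0) := by rintro ⟨rfl, rfl⟩; simp at hdet
  have hden : (a : ℂ) + z * c ≠ 0 := denom_ne hpr hz
  have hN : normSq ((a : ℂ) + z * c) ≠ 0 := by simpa using hden
  set w : ℂ := ((b : ℂ) + z * d) / ((a : ℂ) + z * c) with hw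
  set x' : ℝ := (b + x * d) / (a + x * c) with hx'
  have hwim : w.im = z.im / normSq ((a : ℂ) + z * c) := im_moebius hdet hden
  have hwpos : 0 < w.im := by
    rw [hwim]; exact div_pos hz (Complex.normSq_pos.mpr hden)
  have hxC : ((a : ℝ) : ℂ) + (x : ℂ) * c ≠ 0 := by
    have : ((a : ℂ) + x * c) = ((a + x * c : ℝ) : ℂ) := by push_cast; ring
    rw [this]; exact_mod_cast hx
  have hdiff : ((x' : ℝ) : ℂ) - w
      = ((x : ℂ) - z) / (((a : ℂ) + x * c) * ((a : ℂ) + z * c)) := by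
    rw [hw, hx']
    push_cast
    rw [div_sub_div _ _ hxC hden]
    congr 1
    linear_combination ((x : ℂ) - z) * hdetC
  rw [lobK_eq τ hz x, lobK_eq τ hwpos x']
  have hns : normSq (((x' : ℝ) : ℂ) - w)
      = normSq ((x : ℂ) - z) / ((a + x * c) ^ 2 * normSq ((a : ℂ) + z * c)) := by
    rw [hdiff, Complex.normSq_div, Complex.normSq_mul]
    have : ((a : ℂ) + x * c) = ((a + x * c : ℝ) : ℂ) := by push_cast; ring
    rw [this, Complex.normSq_ofReal]
    ring
  have hA : normSq ((x : ℂ) - z) / z.im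
      = (normSq (((x' : ℝ) : ℂ) - w) / w.im) * (|a + x * c| * |a + x * c|) := by
    have habs2 : |a + x * c| * |a + x * c| = (a + x * c) ^ 2 := by
      rw [abs_mul_abs_self]; ring
    rw [hns, hwim, habs2]
    field_simp
  rw [hA]
  have hq : (0 : ℝ) ≤ normSq (((x' : ℝ) : ℂ) - w) / w.im := div_nonneg (Complex.normSq_nonneg _) hwpos.le
  rw [show ((((normSq (((x' : ℝ) : ℂ) - w) / w.im) * (|a + x * c| * |a + x * c|) : ℝ)) : ℂ)
      = (((normSq (((x' : ℝ) : ℂ) - w) / w.im : ℝ) : ℂ)) * ((|a + x * c| * |a + x * c| : ℝ) : ℂ)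
      by push_cast; ring]
  have habs : ((|a + x * c| : ℝ) : ℂ) ≠ 0 := by
    exact_mod_cast abs_ne_zero.mpr hx
  rw [Complex.mul_cpow_ofReal_nonneg hq (by positivity : (0:ℝ) ≤ |a + x * c| * |a + x * c|)]
  congr 1
  rw [two_mul, Complex.cpow_add _ _ habs]
  push_cast
  exact Complex.mul_cpow_ofReal_nonneg (abs_nonneg _) (abs_nonneg _) τ

lemma hasDerivT {a b c d : ℝ} (hdetC : (a : ℂ) * d - b * c = 1) {z : ℂ}
    (hden : (a : ℂ) + z * c ≠ 0) :
    HasDerivAt (fun z : ℂ => ((b : ℂ) + z * d) / ((a : ℂ) + z * c))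
      (1 / ((a : ℂ) + z * c) ^ 2) z := by
  have h1 : HasDerivAt (fun z : ℂ => (b : ℂ) + z * d) (d : ℂ) z := by
    simpa using ((hasDerivAt_id z).mul_const (d : ℂ)).const_add (b : ℂ)
  have h2 : HasDerivAt (fun z : ℂ => (a : ℂ) + z * c) (c : ℂ) z := by
    simpa using ((hasDerivAt_id z).mul_const (c : ℂ)).const_add (a : ℂ)
  have h3 := h1.div h2 hden
  have : ((d : ℂ) * ((a : ℂ) + z * c) - ((b : ℂ) + z * d) * c) = 1 := by
    linear_combination hdetC
  rw [this] at h3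
  exact h3

lemma lob_invariance {a b c d : ℝ} (hdet : a * d - b * c = 1) (G : ℂ → ℂ) :
    ∫ z, G (((b : ℂ) + z * d) / ((a : ℂ) + z * c)) ∂lobMeasure = ∫ w, G w ∂lobMeasure := by
  have hdetC : (a : ℂ) * d - b * c = 1 := by exact_mod_cast hdet
  have hac : ¬(a = 0 ∧ c = 0) := by rintro ⟨rfl, rfl⟩; simp at hdet
  have hdc : ¬(d = 0 ∧ -c = 0) := by
    rintro ⟨rfl, hc⟩; rw [neg_eq_zero] at hc; subst hc; simp at hdet
  set S : Set ℂ := {z : ℂ | 0 < z.im} with hSdef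
  have hS : MeasurableSet S := (isOpen_lt continuous_const Complex.continuous_im).measurableSet
  set T : ℂ → ℂ := fun z => ((b : ℂ) + z * d) / ((a : ℂ) + z * c) with hT
  have hdenz : ∀ z ∈ S, (a : ℂ) + z * c ≠ 0 := fun z hz => denom_ne hac hz
  have hTim : ∀ z ∈ S, (T z).im = z.im / normSq ((a : ℂ) + z * c) :=
    fun z hz => im_moebius hdet (hdenz z hz)
  have hTmem : ∀ z ∈ S, T z ∈ S := by
    intro z hz
    have := hTim z hz
    simp only [hSdef, Set.mem_setOf_eq] at hz ⊢
    rw [this]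
    exact div_pos hz (Complex.normSq_pos.mpr (hdenz z hz))
  -- image
  have himage : T '' S = S := by
    apply Set.Subset.antisymm
    · rintro _ ⟨z, hz, rfl⟩; exact hTmem z hz
    · intro w hw
      have hw' : 0 < w.im := hw
      have hden2 : ((d : ℝ) : ℂ) + w * ((-c : ℝ) : ℂ) ≠ 0 := denom_ne hdc hw'
      refine ⟨(((-b : ℝ) : ℂ) + w * ((a : ℝ) : ℂ)) / (((d : ℝ) : ℂ) + w * ((-c : ℝ) : ℂ)), ?_, ?_⟩
      · have hdet2 : d * a - (-b) * (-c) = 1 := by linarith [hdet]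
        have := im_moebius (q := (-b : ℝ)) (s := (a : ℝ)) hdet2 hden2
        simp only [hSdef, Set.mem_setOf_eq]
        rw [this]
        exact div_pos hw' (Complex.normSq_pos.mpr hden2)
      · set z₀ : ℂ := (((-b : ℝ) : ℂ) + w * ((a : ℝ) : ℂ)) / (((d : ℝ) : ℂ) + w * ((-c : ℝ) : ℂ))
          with hz₀
        have hden2' : ((d : ℂ) + w * -(c : ℂ)) ≠ 0 := by push_cast at hden2; exact hden2
        have hden2'' : ((d : ℂ) + -(w * (c : ℂ))) ≠ 0 := by
          rw [show (d : ℂ) + -(w * (c : ℂ)) = (d : ℂ) + w * -(c : ℂ) by ring]; exact hden2'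
        have hden3 : (a : ℂ) + z₀ * c ≠ 0 := by
          have heq : (a : ℂ) + z₀ * c = 1 / ((d : ℂ) + w * -(c : ℂ)) := by
            rw [hz₀]
            push_cast
            field_simp [hden2'']
            linear_combination hdetC
          rw [heq]
          exact one_div_ne_zero hden2'
        show T z₀ = w
        rw [hT]
        simp only
        rw [div_eq_iff hden3, hz₀]
        push_cast
        field_simp [hden2'']
        ring
  -- injectivity
  have hinj : Set.InjOn T S := by
    intro z1 hz1 z2 hz2 heq
    have h1 := hdenz z1 hz1
    have h2 := hdenz z2 hz2
    rw [hT] at heq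
    simp only at heq
    rw [div_eq_div_iff h1 h2] at heq
    have : (z1 - z2) * ((a : ℂ) * d - b * c) = 0 := by linear_combination heq
    rw [hdetC, mul_one, sub_eq_zero] at this
    exact this
  -- derivative
  have hder : ∀ z ∈ S, HasFDerivWithinAt T
      (((ContinuousLinearMap.smulRight (1 : ℂ →L[ℂ] ℂ) (1 / ((a : ℂ) + z * c) ^ 2)).restrictScalars ℝ
        : ℂ →L[ℝ] ℂ)) S z := by
    intro z hz
    exact (((hasDerivT hdetC (hdenz z hz)).hasFDerivAt).restrictScalars ℝ).hasFDerivWithinAt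
  -- density as NNReal
  have hmeas : Measurable fun z : ℂ => (1 / (4 * z.im ^ 2)).toNNReal :=
    (measurable_const.div ((Complex.measurable_im.pow measurable_const).const_mul 4)).real_toNNReal
  have hlob : lobMeasure = (volume.restrict S).withDensity
      (fun z => ((1 / (4 * z.im ^ 2)).toNNReal : ℝ≥0∞)) := rfl
  rw [hlob, integral_withDensity_eq_integral_smul hmeas, integral_withDensity_eq_integral_smul hmeas]
  have key := MeasureTheory.integral_image_eq_integral_abs_det_fderiv_smul volume hS hder hinj
    (fun w => (1 / (4 * w.im ^ 2)).toNNReal • G w)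
  rw [himage] at key
  rw [key]
  apply setIntegral_congr_fun hS
  intro z hz
  have hz' : 0 < z.im := hz
  have hden := hdenz z hz
  have hN : 0 < normSq ((a : ℂ) + z * c) := Complex.normSq_pos.mpr hden
  have hdet_eq : (((ContinuousLinearMap.smulRight (1 : ℂ →L[ℂ] ℂ)
      (1 / ((a : ℂ) + z * c) ^ 2)).restrictScalars ℝ : ℂ →L[ℝ] ℂ)).det
      = normSq (1 / ((a : ℂ) + z * c) ^ 2) := det_mul_complex _
  simp only [NNReal.smul_def, smul_smul]
  rw [hdet_eq]
  congr 1
  have h1 : normSq (1 / ((a : ℂ) + z * c) ^ 2) = 1 / normSq ((a : ℂ) + z * c) ^ 2 := by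
    rw [Complex.normSq_div, map_pow, Complex.normSq_one]
  have h2 : (T z).im = z.im / normSq ((a : ℂ) + z * c) := hTim z hz
  rw [h1, h2]
  rw [_root_.abs_of_nonneg (by positivity : (0:ℝ) ≤ 1 / normSq ((a : ℂ) + z * c) ^ 2)]
  rw [Real.coe_toNNReal _ (by positivity : (0:ℝ) ≤ 1 / (4 * (z.im / normSq ((a : ℂ) + z * c)) ^ 2)),
    Real.coe_toNNReal _ (by positivity : (0:ℝ) ≤ 1 / (4 * z.im ^ 2))]
  field_simp

/-- The Fourier transform intertwines the geometric action `R(g)f(z) = f(z^[g])` with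
the principal series action: `J(R(g)f)(τ; x) = Jf(τ; x^[g]) |a + xc|^{2τ}`. -/
theorem stmt2 (a b c d : ℝ) (hdet : a * d - b * c = 1)
    (f : ℂ → ℂ) (hf : ContDiff ℝ (⊤ : ℕ∞) f) (hsupp : HasCompactSupport f)
    (hΛ : tsupport f ⊆ {z : ℂ | 0 < z.im})
    (τ : ℂ) (x : ℝ) (hx : a + x * c ≠ 0) :
    lobJ (fun z => f (((b : ℂ) + z * d) / ((a : ℂ) + z * c))) τ x
      = lobJ f τ ((b + x * d) / (a + x * c)) * ((|a + x * c| : ℝ) : ℂ) ^ (2 * τ) := by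
  have hS : MeasurableSet {z : ℂ | 0 < z.im} :=
    (isOpen_lt continuous_const Complex.continuous_im).measurableSet
  have hae : ∀ᵐ z ∂lobMeasure, 0 < z.im := by
    have h1 : ∀ᵐ z ∂(volume.restrict {z : ℂ | 0 < z.im}), 0 < z.im := ae_restrict_mem hS
    exact h1.filter_mono (withDensity_absolutelyContinuous _ _).ae_le
  unfold lobJ
  have step1 : ∫ z, lobK τ z x * f (((b : ℂ) + z * d) / ((a : ℂ) + z * c)) ∂lobMeasure
      = ∫ z, (lobK τ (((b : ℂ) + z * d) / ((a : ℂ) + z * c)) ((b + x * d) / (a + x * c))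
          * f (((b : ℂ) + z * d) / ((a : ℂ) + z * c))) * ((|a + x * c| : ℝ) : ℂ) ^ (2 * τ)
        ∂lobMeasure := by
    apply integral_congr_ae
    filter_upwards [hae] with z hz
    rw [kernel_transform hdet τ hz hx]
    ring
  rw [step1, integral_mul_const]
  congr 1
  exact lob_invariance hdet (fun w => lobK τ w ((b + x * d) / (a + x * c)) * f w)
end

section
/- Let Ω_n be the set of integer pairs (p, q) with 0 ≤ p ≤ n, 0 ≤ q ≤ n, and (p,q) ≠ (n,n), and let A_n be the span of the rational functions z^p z̄^q/(z - z̄)^n for (p,q) ∈ Ω_n, inside the field of rational functions in two independent variables z, z̄. Then the sum A = ∑_n A_n is a subalgebra of the field of rational functions: the product of an element of A_m and an element of A_n lies in A. -/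
open MvPolynomial

/-- The field of rational functions in two independent variables `z, z̄`. -/
abbrev RatField2 : Type := FractionRing (MvPolynomial (Fin 2) ℂ)

noncomputable instance : Algebra ℂ RatField2 :=
  ((algebraMap (MvPolynomial (Fin 2) ℂ) RatField2).comp
    (algebraMap ℂ (MvPolynomial (Fin 2) ℂ))).toAlgebra

/-- The variable `z`. -/
noncomputable def Zvar : RatField2 := algebraMap (MvPolynomial (Fin 2) ℂ) RatField2 (X 0)

/-- The variable `z̄`. -/
noncomputable def Wvar : RatField2 := algebraMap (MvPolynomial (Fin 2) ℂ) RatField2 (X 1)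

/-- `A_n` : the span of `z^p z̄^q / (z - z̄)^n` over `(p,q) ∈ Ω_n`,
where `Ω_n = ([0,n] × [0,n]) \ {(n,n)}`. -/
noncomputable def An (n : ℕ) : Submodule ℂ RatField2 :=
  Submodule.span ℂ {f | ∃ p q : ℕ, p ≤ n ∧ q ≤ n ∧ (p, q) ≠ (n, n) ∧
    f = Zvar ^ p * Wvar ^ q / (Zvar - Wvar) ^ n}

/- Multiplying generators adds exponents: `z^p z̄^q/(z - z̄)^m · z^r z̄^s/(z - z̄)^n` is the
generator of `A_{m+n}` with exponents `(p + r, q + s)`, which is not the excluded corner since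
`(r, s) ≠ (n, n)`. Hence `A_m A_n ≤ A_{m+n}`, and `A` is closed under products because
multiplication of submodules distributes over suprema. -/

theorem Submodule.span_mul_span_le {R A : Type*} [CommSemiring R] [Semiring A] [Module R A]
    [SMulCommClass R A A] [IsScalarTower R A A] {S T : Set A} {P : Submodule R A}
    (h : ∀ s ∈ S, ∀ t ∈ T, s * t ∈ P) : span R S * span R T ≤ P :=
  mul_le.2 fun _ hx y hy ↦
    (span_le (p := P.comap (LinearMap.mulRight R y))).2
      (fun s hs ↦ (span_le (p := P.comap (LinearMap.mulLeft R s))).2 (h s hs) hy) hx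

-- `Submodule.span_mul_span` does not apply: it needs the module structure to come from an
-- algebra, and the one on `RatField2` (from `FractionRing`) is not reducibly that of the algebra.
theorem An_mul_An_le (m n : ℕ) : An m * An n ≤ An (m + n) := by
  refine Submodule.span_mul_span_le ?_
  rintro _ ⟨p, q, hp, hq, _, rfl⟩ _ ⟨r, s, hr, hs, hrs, rfl⟩
  refine Submodule.subset_span ⟨p + r, q + s, by omega, by omega, ?_, ?_⟩
  · simp only [ne_eq, Prod.mk.injEq, not_and] at hrs ⊢
    omega
  · rw [div_mul_div_comm, pow_add, pow_add, pow_add]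
    ring

/-- `A = ∑_n A_n` is closed under multiplication, i.e. is a subalgebra of the
field of rational functions. -/
theorem stmt13 (f g : RatField2) (hf : f ∈ ⨆ n : ℕ, An n) (hg : g ∈ ⨆ n : ℕ, An n) :
    f * g ∈ ⨆ n : ℕ, An n := by
  have hfg := Submodule.mul_mem_mul hf hg
  rw [Submodule.iSup_mul] at hfg
  simp only [Submodule.mul_iSup] at hfg
  exact iSup_le (fun m ↦ iSup_le fun n ↦ (An_mul_An_le m n).trans (le_iSup An (m + n))) hfg
end

section
/- With A_n ⊂ ℂ(z, z̄) the span of z^p z̄^q/(z - z̄)^n over (p,q) ∈ Ω_n (Ω_n = [0,n]² ∖ {(n,n)} in integer points), the space A = ∑_n A_n is invariant under each of the six operators ∂_z, z∂_z, z²∂_z, ∂_z̄, z̄∂_z̄, z̄²∂_z̄ (derivatives treating z and z̄ as independent variables). -/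
/-- `∂_z` (the variables `z`, `z̄` are treated as independent). -/
noncomputable def O1 : (ℂ → ℂ → ℂ) → (ℂ → ℂ → ℂ) :=
  fun f z w => deriv (fun z' => f z' w) z
/-- `z ∂_z`. -/
noncomputable def O2 : (ℂ → ℂ → ℂ) → (ℂ → ℂ → ℂ) :=
  fun f z w => z * deriv (fun z' => f z' w) z
/-- `z² ∂_z`. -/
noncomputable def O3 : (ℂ → ℂ → ℂ) → (ℂ → ℂ → ℂ) :=
  fun f z w => z ^ 2 * deriv (fun z' => f z' w) z
/-- `∂_z̄`. -/
noncomputable def O4 : (ℂ → ℂ → ℂ) → (ℂ → ℂ → ℂ) :=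
  fun f z w => deriv (fun w' => f z w') w
/-- `z̄ ∂_z̄`. -/
noncomputable def O5 : (ℂ → ℂ → ℂ) → (ℂ → ℂ → ℂ) :=
  fun f z w => w * deriv (fun w' => f z w') w
/-- `z̄² ∂_z̄`. -/
noncomputable def O6 : (ℂ → ℂ → ℂ) → (ℂ → ℂ → ℂ) :=
  fun f z w => w ^ 2 * deriv (fun w' => f z w') w

/-- `A_n`: the span of the functions `z^p z̄^q/(z - z̄)^n` for
`(p, q) ∈ Ω_n = ([0,n] × [0,n]) \ {(n,n)}`. -/
noncomputable def AnF (n : ℕ) : Submodule ℂ (ℂ → ℂ → ℂ) :=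
  Submodule.span ℂ {f | ∃ p q : ℕ, p ≤ n ∧ q ≤ n ∧ (p, q) ≠ (n, n) ∧
    f = fun z w => z ^ p * w ^ q / (z - w) ^ n}

/-!
Off the diagonal, `z ^ k ∂_z` sends `z^p z̄^q / (z - z̄)^n` to
`((p - n) z^(p+k) z̄^q - p z^(p+k-1) z̄^(q+1)) / (z - z̄)^(n+1)`. For `k ≤ 2` the first exponent
pair lies in `Ω_(n+1)` unless `p = n`, where its coefficient vanishes. The second may be the excluded
corner `(n+1, n+1)`, but every corner element `z^m z̄^m / (z - z̄)^m` with `m ≥ 1` is a difference of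
two generators of `A_(m+1)`. The operators in `z̄` follow by the symmetry `z ↔ z̄`,
which maps each `A_n` to itself up to the sign `(-1)^n`.

On the diagonal all generators take the junk value `0`, and `deriv` is not additive in general.
For `f ∈ A` and fixed `z̄ = w`, the function `f(·, w)` is holomorphic off `w` and has a finite limit
at infinity; if it is differentiable at `w` it is constant by Liouville's theorem. Either way its
derivative at `w` is `0`, which makes `∂_z` additive on `A` and matches the junk value on the right.
-/

open Filter Topology

def regularAwayFrom (w : ℂ) : Submodule ℂ (ℂ → ℂ) where
  carrier := {g | DifferentiableOn ℂ g {w}ᶜ ∧ ∃ c, Tendsto g (cocompact ℂ) (𝓝 c)}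
  zero_mem' := ⟨differentiableOn_const 0, 0, tendsto_const_nhds⟩
  add_mem' := fun ⟨hf, c, hc⟩ ⟨hg, d, hd⟩ => ⟨hf.add hg, c + d, hc.add hd⟩
  smul_mem' := fun a _ ⟨hf, c, hc⟩ => ⟨hf.const_smul a, a • c, hc.const_smul a⟩

theorem deriv_eq_zero_of_mem_regularAwayFrom {w : ℂ} {g : ℂ → ℂ} (hg : g ∈ regularAwayFrom w) :
    deriv g w = 0 := by
  obtain ⟨hdiff, c, hc⟩ := hg
  by_cases hw : DifferentiableAt ℂ g w
  · have hentire : Differentiable ℂ g := fun z => by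
      rcases eq_or_ne z w with rfl | hz
      · exact hw
      · exact hdiff.differentiableAt (isOpen_compl_singleton.mem_nhds hz)
    rw [hentire.eq_const_of_tendsto_cocompact hc]
    exact deriv_const w c
  · exact deriv_zero_of_not_differentiableAt hw

theorem deriv_add_of_mem_regularAwayFrom {w : ℂ} {f g : ℂ → ℂ} (hf : f ∈ regularAwayFrom w)
    (hg : g ∈ regularAwayFrom w) (z : ℂ) : deriv (f + g) z = deriv f z + deriv g z := by
  rcases eq_or_ne z w with rfl | hz
  · rw [deriv_eq_zero_of_mem_regularAwayFrom hf, deriv_eq_zero_of_mem_regularAwayFrom hg,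
      deriv_eq_zero_of_mem_regularAwayFrom (add_mem hf hg), add_zero]
  · exact deriv_add (hf.1.differentiableAt (isOpen_compl_singleton.mem_nhds hz))
      (hg.1.differentiableAt (isOpen_compl_singleton.mem_nhds hz))

theorem exists_tendsto_pow_div_sub_pow_cocompact (w : ℂ) {p n : ℕ} (hp : p ≤ n) :
    ∃ c, Tendsto (fun z : ℂ => z ^ p / (z - w) ^ n) (cocompact ℂ) (𝓝 c) := by
  obtain ⟨m, rfl⟩ := Nat.exists_eq_add_of_le hp
  have hinv : Tendsto (fun z : ℂ => (z - w)⁻¹) (cocompact ℂ) (𝓝 0) := by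
    rw [← Metric.cobounded_eq_cocompact]
    exact tendsto_inv₀_cobounded.comp (tendsto_sub_const_cobounded w)
  have hF : Continuous fun u : ℂ => (1 + w * u) ^ p * u ^ m := by fun_prop
  refine ⟨(1 + w * 0) ^ p * 0 ^ m, ((hF.tendsto 0).comp hinv).congr' ?_⟩
  filter_upwards [(isCompact_singleton (x := w)).compl_mem_cocompact] with z hz
  have : z - w ≠ 0 := sub_ne_zero.2 hz
  have hz' : 1 + w * (z - w)⁻¹ = z * (z - w)⁻¹ := by field_simp; ring
  simp only [Function.comp_apply, hz', mul_pow, mul_assoc, inv_pow, div_eq_mul_inv, pow_add,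
    mul_inv]

local notation "𝒜" => ⨆ n : ℕ, AnF n

noncomputable def fracMonomial (p q n : ℕ) : ℂ → ℂ → ℂ :=
  fun z w => z ^ p * w ^ q / (z - w) ^ n

theorem iSup_AnF_le {S : Submodule ℂ (ℂ → ℂ → ℂ)}
    (h : ∀ n p q, p ≤ n → q ≤ n → (p, q) ≠ (n, n) → fracMonomial p q n ∈ S) : 𝒜 ≤ S :=
  iSup_le fun n => Submodule.span_le.2 <| by
    rintro _ ⟨p, q, hp, hq, hpq, rfl⟩
    exact h n p q hp hq hpq

theorem fracMonomial_mem_of_ne {n p q : ℕ} (hp : p ≤ n) (hq : q ≤ n) (hpq : (p, q) ≠ (n, n)) :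
    fracMonomial p q n ∈ 𝒜 :=
  le_iSup AnF n (Submodule.subset_span ⟨p, q, hp, hq, hpq, rfl⟩)

theorem fracMonomial_self_eq_sub {n : ℕ} (hn : n ≠ 0) :
    fracMonomial n n n = fracMonomial (n + 1) n (n + 1) - fracMonomial n (n + 1) (n + 1) := by
  funext z w
  rcases eq_or_ne z w with rfl | hzw
  · simp [fracMonomial, hn]
  · have : z - w ≠ 0 := sub_ne_zero.2 hzw
    simp only [fracMonomial, Pi.sub_apply]
    field_simp
    ring

theorem fracMonomial_mem {n p q : ℕ} (hn : n ≠ 0) (hp : p ≤ n) (hq : q ≤ n) :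
    fracMonomial p q n ∈ 𝒜 := by
  by_cases hpq : (p, q) = (n, n)
  · obtain ⟨rfl, rfl⟩ := Prod.mk.inj hpq
    rw [fracMonomial_self_eq_sub hn]
    exact sub_mem (fracMonomial_mem_of_ne (by omega) (by omega) (by simp))
      (fracMonomial_mem_of_ne (by omega) (by omega) (by simp))
  · exact fracMonomial_mem_of_ne hp hq hpq

def regularAwayFromDiagonal : Submodule ℂ (ℂ → ℂ → ℂ) where
  carrier := {f | ∀ w, (fun z => f z w) ∈ regularAwayFrom w}
  zero_mem' _ := zero_mem _
  add_mem' hf hg w := add_mem (hf w) (hg w)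
  smul_mem' a _ hf w := Submodule.smul_mem _ a (hf w)

theorem fracMonomial_mem_regularAwayFromDiagonal {p n : ℕ} (q : ℕ) (hp : p ≤ n) :
    fracMonomial p q n ∈ regularAwayFromDiagonal := by
  intro w
  obtain ⟨c, hc⟩ := exists_tendsto_pow_div_sub_pow_cocompact w hp
  refine ⟨fun z hz => ?_, w ^ q * c, (hc.const_mul (w ^ q)).congr fun z => ?_⟩
  · exact (((differentiableAt_pow p).mul_const _).div ((differentiableAt_id.sub_const w).pow n)
      (pow_ne_zero _ (sub_ne_zero.2 hz))).differentiableWithinAt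
  · simp only [fracMonomial]
    ring

noncomputable def zPowDeriv (k : ℕ) (f : ℂ → ℂ → ℂ) : ℂ → ℂ → ℂ :=
  fun z w => z ^ k * deriv (fun z' => f z' w) z

theorem zPowDeriv_add (k : ℕ) {f g : ℂ → ℂ → ℂ} (hf : f ∈ regularAwayFromDiagonal)
    (hg : g ∈ regularAwayFromDiagonal) : zPowDeriv k (f + g) = zPowDeriv k f + zPowDeriv k g := by
  funext z w
  simp only [zPowDeriv, Pi.add_apply, ← mul_add]
  rw [← deriv_add_of_mem_regularAwayFrom (hf w) (hg w)]
  rfl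

theorem zPowDeriv_smul (k : ℕ) (a : ℂ) (f : ℂ → ℂ → ℂ) :
    zPowDeriv k (a • f) = a • zPowDeriv k f := by
  funext z w
  simp only [zPowDeriv, Pi.smul_apply, smul_eq_mul, deriv_const_mul_field]
  ring

theorem zPowDeriv_fracMonomial (k : ℕ) {p n : ℕ} (q : ℕ) (hn : n ≠ 0) (hp : p ≤ n) :
    zPowDeriv k (fracMonomial p q n) = ((p : ℂ) - n) • fracMonomial (p + k) q (n + 1)
      - (p : ℂ) • fracMonomial (p + k - 1) (q + 1) (n + 1) := by
  funext z w
  simp only [zPowDeriv, Pi.sub_apply, Pi.smul_apply, smul_eq_mul]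
  rcases eq_or_ne z w with rfl | hzw
  · rw [deriv_eq_zero_of_mem_regularAwayFrom (fracMonomial_mem_regularAwayFromDiagonal q hp z)]
    simp [fracMonomial]
  have hzw' : z - w ≠ 0 := sub_ne_zero.2 hzw
  have hderiv : HasDerivAt (fun z' => fracMonomial p q n z' w)
      ((p * z ^ (p - 1) * w ^ q * (z - w) ^ n - z ^ p * w ^ q * (n * (z - w) ^ (n - 1) * 1))
        / ((z - w) ^ n) ^ 2) z :=
    ((hasDerivAt_pow p z).mul_const (w ^ q)).div
      (((hasDerivAt_id z).sub_const w).pow n) (pow_ne_zero n hzw')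
  rw [hderiv.deriv]
  obtain ⟨m, rfl⟩ := Nat.exists_eq_add_of_le' (Nat.one_le_iff_ne_zero.2 hn)
  rcases p with _ | p <;>
  · simp only [fracMonomial, Nat.add_sub_cancel, Nat.succ_add_sub_one]
    push_cast
    field_simp
    ring

def zPowDerivDomain (k : ℕ) : Submodule ℂ (ℂ → ℂ → ℂ) where
  carrier := {f | f ∈ regularAwayFromDiagonal ∧ zPowDeriv k f ∈ 𝒜}
  zero_mem' := ⟨zero_mem _, by convert zero_mem 𝒜; funext z w; simp [zPowDeriv]⟩
  add_mem' := fun ⟨hf, hf'⟩ ⟨hg, hg'⟩ =>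
    ⟨add_mem hf hg, zPowDeriv_add k hf hg ▸ add_mem hf' hg'⟩
  smul_mem' := fun a _ ⟨hf, hf'⟩ =>
    ⟨Submodule.smul_mem _ a hf, zPowDeriv_smul k a _ ▸ Submodule.smul_mem _ a hf'⟩

theorem zPowDeriv_mem {k : ℕ} (hk : k ≤ 2) {f : ℂ → ℂ → ℂ} (hf : f ∈ 𝒜) : zPowDeriv k f ∈ 𝒜 := by
  refine (iSup_AnF_le (S := zPowDerivDomain k) (fun n p q hp hq hpq => ?_) hf).2
  have hn : n ≠ 0 := by rintro rfl; simp_all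
  refine ⟨fracMonomial_mem_regularAwayFromDiagonal q hp, ?_⟩
  rw [zPowDeriv_fracMonomial k q hn hp]
  refine sub_mem ?_ (Submodule.smul_mem _ _ (fracMonomial_mem (by omega) (by omega) (by omega)))
  rcases eq_or_lt_of_le hp with rfl | hpn
  · simp -- the coefficient `p - n` vanishes
  · exact Submodule.smul_mem _ _ (fracMonomial_mem (by omega) (by omega) (by omega))

def swapArgs : (ℂ → ℂ → ℂ) →ₗ[ℂ] (ℂ → ℂ → ℂ) where
  toFun f z w := f w z
  map_add' _ _ := rfl
  map_smul' _ _ := rfl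

theorem swapArgs_fracMonomial (p q n : ℕ) :
    swapArgs (fracMonomial p q n) = (-1 : ℂ) ^ n • fracMonomial q p n := by
  funext z w
  simp only [swapArgs, LinearMap.coe_mk, AddHom.coe_mk, fracMonomial, Pi.smul_apply, smul_eq_mul]
  rw [← neg_sub, neg_pow, div_eq_mul_inv, mul_inv, ← inv_pow, inv_neg, inv_one]
  ring

theorem swapArgs_mem {f : ℂ → ℂ → ℂ} (hf : f ∈ 𝒜) : swapArgs f ∈ 𝒜 := by
  refine iSup_AnF_le (S := Submodule.comap swapArgs 𝒜) (fun n p q hp hq hpq => ?_) hf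
  rw [Submodule.mem_comap, swapArgs_fracMonomial]
  exact Submodule.smul_mem _ _ (fracMonomial_mem_of_ne hq hp (by simpa [and_comm] using hpq))

theorem O1_eq_zPowDeriv : O1 = zPowDeriv 0 := by
  funext f z w
  simp [O1, zPowDeriv]

theorem O2_eq_zPowDeriv : O2 = zPowDeriv 1 := by
  funext f z w
  simp [O2, zPowDeriv]

/-- The space `A = ∑_n A_n` is invariant under each of the six operators
`∂_z, z∂_z, z²∂_z, ∂_z̄, z̄∂_z̄, z̄²∂_z̄`. -/
theorem stmt14 (o : (ℂ → ℂ → ℂ) → (ℂ → ℂ → ℂ))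
    (ho : o ∈ ({O1, O2, O3, O4, O5, O6} : Set ((ℂ → ℂ → ℂ) → (ℂ → ℂ → ℂ))))
    (f : ℂ → ℂ → ℂ) (hf : f ∈ ⨆ n : ℕ, AnF n) :
    o f ∈ ⨆ n : ℕ, AnF n := by
  have hO1 : ∀ g ∈ 𝒜, O1 g ∈ 𝒜 := fun g hg => O1_eq_zPowDeriv ▸ zPowDeriv_mem (by norm_num) hg
  have hO2 : ∀ g ∈ 𝒜, O2 g ∈ 𝒜 := fun g hg => O2_eq_zPowDeriv ▸ zPowDeriv_mem (by norm_num) hg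
  have hO3 : ∀ g ∈ 𝒜, O3 g ∈ 𝒜 := fun g hg => zPowDeriv_mem (by norm_num) hg
  simp only [Set.mem_insert_iff, Set.mem_singleton_iff] at ho
  rcases ho with rfl | rfl | rfl | rfl | rfl | rfl
  · exact hO1 f hf
  · exact hO2 f hf
  · exact hO3 f hf
  -- `O4`, `O5`, `O6` are definitionally `O1`, `O2`, `O3` conjugated by `swapArgs`.
  · exact swapArgs_mem (hO1 _ (swapArgs_mem hf))
  · exact swapArgs_mem (hO2 _ (swapArgs_mem hf))
  · exact swapArgs_mem (hO3 _ (swapArgs_mem hf))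
end

section
/- The function 1/(z - z̄) is a cyclic vector for the family of operators ∂_z, z∂_z, z²∂_z, ∂_z̄, z̄∂_z̄, z̄²∂_z̄ acting on A = ∑_n A_n: the linear span of all images of 1/(z - z̄) under arbitrary finite products of these operators equals A. -/
/-!
Write `f p q n = z^p z̄^q / (z - z̄)^n`. Direct computation gives
`z^k ∂_z (f p q n) = p f (p+k-1) q n - n f (p+k) q (n+1)` and
`f p q n = f (p+1) q (n+1) - f p (q+1) (n+1)`, and the operators in `z̄` are the conjugates of
those in `z` by the swap `z ↔ z̄`. Hence `A` is invariant under the six operators, so it contains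
the span of the orbit of `f 0 0 1`; conversely the same formulas reach every `f p q n` with
`(p, q) ∈ Ω_n` from `f 0 0 1`, by induction on `n`.

The one analytic point is that `deriv` is additive only at points of differentiability. For fixed
`z̄`, an element of `A` is a polynomial in `(z - z̄)⁻¹` off the diagonal and `0` on it, so it is
either identically zero or not differentiable there: its derivative on the diagonal is `0`.
-/

open Polynomial Filter Topology Submodule

section LinearOn

variable {R M : Type*} [Semiring R] [AddCommMonoid M] [Module R M]

structure IsLinearEndOn (T : M → M) (V : Submodule R M) : Prop where
  mapsTo : ∀ x ∈ V, T x ∈ V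
  map_add : ∀ x ∈ V, ∀ y ∈ V, T (x + y) = T x + T y
  map_smul : ∀ (a : R), ∀ x ∈ V, T (a • x) = a • T x

namespace IsLinearEndOn

variable {T U : M → M} {V : Submodule R M}

lemma comp (hT : IsLinearEndOn T V) (hU : IsLinearEndOn U V) : IsLinearEndOn (T ∘ U) V where
  mapsTo x hx := hT.mapsTo _ (hU.mapsTo x hx)
  map_add x hx y hy := by
    simp only [Function.comp, hU.map_add x hx y hy,
      hT.map_add _ (hU.mapsTo x hx) _ (hU.mapsTo y hy)]
  map_smul a x hx := by
    simp only [Function.comp, hU.map_smul a x hx, hT.map_smul a _ (hU.mapsTo x hx)]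

lemma of_span {s : Set M} (hadd : ∀ x ∈ span R s, ∀ y ∈ span R s, T (x + y) = T x + T y)
    (hsmul : ∀ (a : R), ∀ x ∈ span R s, T (a • x) = a • T x)
    (hs : ∀ x ∈ s, T x ∈ span R s) : IsLinearEndOn T (span R s) where
  mapsTo x hx := by
    induction hx using Submodule.span_induction with
    | mem x hx => exact hs x hx
    | zero => rw [show T 0 = 0 by simpa using hsmul 0 0 (zero_mem _)]; exact zero_mem _
    | add x y hx hy ihx ihy => rw [hadd x hx y hy]; exact add_mem ihx ihy
    | smul a x hx ihx => rw [hsmul a x hx]; exact smul_mem _ a ihx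
  map_add := hadd
  map_smul := hsmul

end IsLinearEndOn

variable (R) in
def orbitSpan (𝒯 : Set (M → M)) (v : M) : Submodule R M :=
  span R {g | ∃ L : List (M → M), (∀ T ∈ L, T ∈ 𝒯) ∧ g = L.foldr (fun T h => T h) v}

variable {𝒯 : Set (M → M)} {v : M} {V : Submodule R M}

lemma mem_orbitSpan_self : v ∈ orbitSpan R 𝒯 v :=
  subset_span ⟨[], by simp, rfl⟩

lemma orbitSpan_le (h𝒯 : ∀ T ∈ 𝒯, IsLinearEndOn T V) (hv : v ∈ V) :
    orbitSpan R 𝒯 v ≤ V := by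
  refine span_le.2 ?_
  rintro _ ⟨L, hL, rfl⟩
  induction L with
  | nil => exact hv
  | cons T L ih =>
    simp only [List.mem_cons, forall_eq_or_imp] at hL
    exact (h𝒯 T hL.1).mapsTo _ (ih hL.2)

lemma isLinearEndOn_orbitSpan (h𝒯 : ∀ T ∈ 𝒯, IsLinearEndOn T V) (hv : v ∈ V) {T : M → M}
    (hT : T ∈ 𝒯) : IsLinearEndOn T (orbitSpan R 𝒯 v) := by
  have hle := orbitSpan_le h𝒯 hv
  refine .of_span (fun x hx y hy => (h𝒯 T hT).map_add x (hle hx) y (hle hy))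
    (fun a x hx => (h𝒯 T hT).map_smul a x (hle hx)) ?_
  rintro _ ⟨L, hL, rfl⟩
  refine subset_span ⟨T :: L, ?_, rfl⟩
  simpa [hT] using hL

lemma map_mem_orbitSpan (h𝒯 : ∀ T ∈ 𝒯, IsLinearEndOn T V) (hv : v ∈ V) (φ : M →ₗ[R] M)
    (hφ : ∀ T ∈ 𝒯, ∃ T' ∈ 𝒯, ∀ g, φ (T g) = T' (φ g)) (hφv : φ v ∈ orbitSpan R 𝒯 v)
    {g : M} (hg : g ∈ orbitSpan R 𝒯 v) : φ g ∈ orbitSpan R 𝒯 v := by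
  suffices orbitSpan R 𝒯 v ≤ (orbitSpan R 𝒯 v).comap φ from this hg
  refine span_le.2 ?_
  rintro _ ⟨L, hL, rfl⟩
  induction L with
  | nil => exact hφv
  | cons T L ih =>
    simp only [List.mem_cons, forall_eq_or_imp] at hL
    obtain ⟨T', hT', hφT⟩ := hφ T hL.1
    rw [SetLike.mem_coe, List.foldr_cons, Submodule.mem_comap, hφT]
    exact (isLinearEndOn_orbitSpan h𝒯 hv hT').mapsTo _ (ih hL.2)

end LinearOn

noncomputable def monFrac (p q n : ℕ) : ℂ → ℂ → ℂ := fun z w => z ^ p * w ^ q / (z - w) ^ n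

lemma monFrac_self (p q : ℕ) {n : ℕ} (hn : n ≠ 0) (z : ℂ) : monFrac p q n z z = 0 := by
  simp [monFrac, hn]

lemma monFrac_eq_sub (p q : ℕ) {n : ℕ} (hn : n ≠ 0) :
    monFrac p q n = monFrac (p + 1) q (n + 1) - monFrac p (q + 1) (n + 1) := by
  funext z w
  by_cases hzw : z = w
  · subst hzw
    simp [monFrac_self, hn]
  · have : z - w ≠ 0 := sub_ne_zero.2 hzw
    simp only [monFrac, Pi.sub_apply]
    field_simp
    ring

lemma flip_monFrac (p q n : ℕ) : flip (monFrac p q n) = (-1 : ℂ) ^ n • monFrac q p n := by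
  funext z w
  simp only [flip, monFrac, Pi.smul_apply, smul_eq_mul]
  rw [show w - z = -1 * (z - w) by ring, mul_pow, div_mul_eq_div_div, mul_div_assoc',
    div_eq_mul_inv _ ((-1 : ℂ) ^ n), ← inv_pow, inv_neg_one]
  ring

noncomputable def monFracSpan : Submodule ℂ (ℂ → ℂ → ℂ) :=
  span ℂ {f | ∃ p q n : ℕ, n ≠ 0 ∧ p ≤ n ∧ q ≤ n ∧ f = monFrac p q n}

lemma monFrac_mem_monFracSpan {p q n : ℕ} (hn : n ≠ 0) (hp : p ≤ n) (hq : q ≤ n) :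
    monFrac p q n ∈ monFracSpan :=
  subset_span ⟨p, q, n, hn, hp, hq, rfl⟩

lemma monFracSpan_eq_iSup : monFracSpan = ⨆ n : ℕ, AnF (n + 1) := by
  have hA : ∀ {p q n : ℕ}, p ≤ n + 1 → q ≤ n + 1 → (p, q) ≠ (n + 1, n + 1) →
      monFrac p q (n + 1) ∈ ⨆ n : ℕ, AnF (n + 1) :=
    fun hp hq hpq => le_iSup (fun n => AnF (n + 1)) _ (subset_span ⟨_, _, hp, hq, hpq, rfl⟩)
  refine le_antisymm (span_le.2 ?_) (iSup_le fun n => span_le.2 ?_)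
  · rintro _ ⟨p, q, n, hn, hp, hq, rfl⟩
    obtain ⟨n, rfl⟩ := Nat.exists_eq_succ_of_ne_zero hn
    by_cases hpq : (p, q) = (n + 1, n + 1)
    · obtain ⟨rfl, rfl⟩ := Prod.mk.inj hpq
      rw [monFrac_eq_sub _ _ hn]
      exact sub_mem (hA le_rfl (by omega) (by simp)) (hA (by omega) le_rfl (by simp))
    · exact hA hp hq hpq
  · rintro _ ⟨p, q, hp, hq, _, rfl⟩
    exact monFrac_mem_monFracSpan (by omega) hp hq

section InvSub

variable {𝕜 : Type*} [NontriviallyNormedField 𝕜]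

open Classical in
/-- The value `0` at `z = a` matches the junk value `x / 0 = 0` that `monFrac` takes on the
diagonal. -/
noncomputable def evalInvSub (a : 𝕜) : 𝕜[X] →ₗ[𝕜] 𝕜 → 𝕜 where
  toFun P z := if z = a then 0 else P.eval (z - a)⁻¹
  map_add' P Q := by ext z; by_cases h : z = a <;> simp [h]
  map_smul' c P := by ext z; by_cases h : z = a <;> simp [h]

lemma Polynomial.eq_zero_of_tendsto_eval_cobounded {P : 𝕜[X]}
    (h : Tendsto P.eval (Bornology.cobounded 𝕜) (𝓝 0)) : P = 0 := by
  have hdeg : P.degree ≤ 0 := by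
    by_contra! hpos
    exact not_tendsto_atTop_of_tendsto_nhds h.norm
      (P.tendsto_norm_atTop hpos tendsto_norm_cobounded_atTop)
  rw [eq_C_of_degree_le_zero hdeg] at h ⊢
  simpa using h

lemma deriv_evalInvSub_self (a : 𝕜) (P : 𝕜[X]) : deriv (evalInvSub a P) a = 0 := by
  by_cases hd : DifferentiableAt 𝕜 (evalInvSub a P) a
  swap
  · exact deriv_zero_of_not_differentiableAt hd
  have hlim : Tendsto (evalInvSub a P) (𝓝[≠] a) (𝓝 0) := by
    simpa [evalInvSub] using hd.continuousAt.tendsto.mono_left nhdsWithin_le_nhds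
  have hne : ∀ᶠ w in Bornology.cobounded 𝕜, w ≠ 0 := Bornology.eventually_ne_cobounded 0
  have hw : Tendsto (fun w : 𝕜 => a + w⁻¹) (Bornology.cobounded 𝕜) (𝓝[≠] a) :=
    tendsto_nhdsWithin_of_tendsto_nhds_of_eventually_within _
      (by simpa using (tendsto_const_nhds (x := a)).add (tendsto_inv₀_cobounded (α := 𝕜)))
      (hne.mono fun w hw => by simpa using hw)
  have hP : P = 0 := by
    refine Polynomial.eq_zero_of_tendsto_eval_cobounded ((hlim.comp hw).congr' ?_)
    filter_upwards [hne] with w hw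
    simp [evalInvSub, hw]
  simp [hP]

lemma differentiableAt_evalInvSub {a z : 𝕜} (hz : z ≠ a) (P : 𝕜[X]) :
    DifferentiableAt 𝕜 (evalInvSub a P) z := by
  have hP : evalInvSub a P =ᶠ[𝓝 z] fun z => P.eval (z - a)⁻¹ := by
    filter_upwards [isOpen_ne.mem_nhds hz] with z hz
    simp [evalInvSub, hz]
  refine DifferentiableAt.congr_of_eventuallyEq ?_ hP
  have : z - a ≠ 0 := sub_ne_zero.2 hz
  fun_prop (disch := assumption)

lemma deriv_add_of_mem_range_evalInvSub {a : 𝕜} {F G : 𝕜 → 𝕜}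
    (hF : F ∈ LinearMap.range (evalInvSub a)) (hG : G ∈ LinearMap.range (evalInvSub a))
    (z : 𝕜) : deriv (F + G) z = deriv F z + deriv G z := by
  obtain ⟨P, rfl⟩ := hF
  obtain ⟨Q, rfl⟩ := hG
  by_cases hz : z = a
  · subst hz
    rw [← map_add, deriv_evalInvSub_self, deriv_evalInvSub_self, deriv_evalInvSub_self, add_zero]
  · exact deriv_add (differentiableAt_evalInvSub hz P) (differentiableAt_evalInvSub hz Q)

end InvSub

/-- With `u = (z - w)⁻¹` one has `w u + 1 = z u`, so `z^p w^q u^n = (w u + 1)^p u^(n-p) w^q`. -/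
lemma monFrac_slice_eq {p q n : ℕ} (hn : n ≠ 0) (hp : p ≤ n) (w : ℂ) :
    (fun z => monFrac p q n z w) =
      evalInvSub w ((C w * X + 1) ^ p * X ^ (n - p) * C (w ^ q)) := by
  funext z
  by_cases hzw : z = w
  · subst hzw
    simp [evalInvSub, monFrac_self _ _ hn]
  · have hd : z - w ≠ 0 := sub_ne_zero.2 hzw
    have key : w * (z - w)⁻¹ + 1 = z * (z - w)⁻¹ := by field_simp; ring
    obtain ⟨m, rfl⟩ := Nat.exists_eq_add_of_le hp
    simp only [evalInvSub, LinearMap.coe_mk, AddHom.coe_mk, hzw, if_false, eval_mul, eval_pow,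
      eval_add, eval_C, eval_X, eval_one, key, Nat.add_sub_cancel_left, monFrac]
    ring

lemma slice_mem_range_evalInvSub {f : ℂ → ℂ → ℂ} (hf : f ∈ monFracSpan) (w : ℂ) :
    (fun z => f z w) ∈ LinearMap.range (evalInvSub w) := by
  induction hf using Submodule.span_induction with
  | mem f hf =>
    obtain ⟨p, q, n, hn, hp, -, rfl⟩ := hf
    exact ⟨_, (monFrac_slice_eq hn hp w).symm⟩
  | zero => exact zero_mem _
  | add f g _ _ hf hg => exact add_mem hf hg
  | smul a f _ hf => exact smul_mem _ a hf

lemma O1_add {f g : ℂ → ℂ → ℂ} (hf : f ∈ monFracSpan) (hg : g ∈ monFracSpan) :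
    O1 (f + g) = O1 f + O1 g := by
  funext z w
  exact deriv_add_of_mem_range_evalInvSub (slice_mem_range_evalInvSub hf w)
    (slice_mem_range_evalInvSub hg w) z

lemma O1_smul (a : ℂ) (f : ℂ → ℂ → ℂ) : O1 (a • f) = a • O1 f := by
  funext z w
  exact congrFun (deriv_const_mul_field' a) z

lemma hasDerivAt_monFrac (p q n : ℕ) {z w : ℂ} (hzw : z ≠ w) :
    HasDerivAt (fun t => monFrac p q n t w)
      (p * z ^ (p - 1) * w ^ q / (z - w) ^ n - n * z ^ p * w ^ q / (z - w) ^ (n + 1)) z := by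
  have hd : z - w ≠ 0 := sub_ne_zero.2 hzw
  have h : HasDerivAt (fun t => monFrac p q n t w) _ z :=
    ((hasDerivAt_pow p z).mul_const (w ^ q)).div (((hasDerivAt_id z).sub_const w).pow n)
      (pow_ne_zero n hd)
  convert h using 1
  rcases n with _ | n
  · simp
  · simp only [id, Nat.add_sub_cancel]
    field_simp
    ring

noncomputable def zOp (k : ℕ) (f : ℂ → ℂ → ℂ) : ℂ → ℂ → ℂ := fun z w => z ^ k * O1 f z w

lemma zOp_monFrac (k : ℕ) {p q n : ℕ} (hn : n ≠ 0) (hp : p ≤ n) :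
    zOp k (monFrac p q n) =
      (p : ℂ) • monFrac (p + k - 1) q n - (n : ℂ) • monFrac (p + k) q (n + 1) := by
  funext z w
  simp only [zOp, O1, Pi.sub_apply, Pi.smul_apply, smul_eq_mul]
  by_cases hzw : z = w
  · subst hzw
    rw [monFrac_slice_eq hn hp z]
    simp [deriv_evalInvSub_self, monFrac_self _ _ hn, monFrac_self _ _ n.succ_ne_zero]
  · rw [(hasDerivAt_monFrac p q n hzw).deriv]
    simp only [monFrac]
    rcases p with _ | p
    · simp only [CharP.cast_eq_zero, zero_mul, zero_div, zero_sub, zero_add]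
      ring
    · simp only [Nat.add_sub_cancel, show p + 1 + k - 1 = p + k by omega]
      ring

lemma zOp_two_monFrac_top (q : ℕ) {n : ℕ} (hn : n ≠ 0) :
    zOp 2 (monFrac n q n) = -((n : ℂ) • monFrac (n + 1) (q + 1) (n + 1)) := by
  rw [zOp_monFrac 2 hn le_rfl, show n + 2 - 1 = n + 1 by omega, monFrac_eq_sub (n + 1) q hn,
    show n + 1 + 1 = n + 2 by omega, smul_sub]
  abel

lemma isLinearEndOn_zOp {k : ℕ} (hk : k ≤ 2) : IsLinearEndOn (zOp k) monFracSpan := by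
  refine .of_span (fun f hf g hg => ?_) (fun a f _ => ?_) ?_
  · funext z w
    simp only [zOp, O1_add hf hg, Pi.add_apply, mul_add]
  · funext z w
    simp only [zOp, O1_smul, Pi.smul_apply, smul_eq_mul]
    ring
  rintro _ ⟨p, q, n, hn, hp, hq, rfl⟩
  by_cases hpk : p + k ≤ n + 1
  · rw [zOp_monFrac k hn hp]
    exact sub_mem (smul_mem _ _ (monFrac_mem_monFracSpan hn (by omega) hq))
      (smul_mem _ _ (monFrac_mem_monFracSpan (Nat.succ_ne_zero n) hpk (by omega)))
  · obtain ⟨rfl, rfl⟩ : p = n ∧ k = 2 := by omega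
    rw [zOp_two_monFrac_top q hn]
    exact neg_mem (smul_mem _ _
      (monFrac_mem_monFracSpan (Nat.succ_ne_zero _) (by omega) (by omega)))

def flipₗ : (ℂ → ℂ → ℂ) →ₗ[ℂ] (ℂ → ℂ → ℂ) where
  toFun := flip
  map_add' _ _ := rfl
  map_smul' _ _ := rfl

lemma isLinearEndOn_flip : IsLinearEndOn flip monFracSpan := by
  refine .of_span (fun f _ g _ => flipₗ.map_add f g) (fun a f _ => flipₗ.map_smul a f) ?_
  rintro _ ⟨p, q, n, hn, hp, hq, rfl⟩
  rw [flip_monFrac]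
  exact smul_mem _ _ (monFrac_mem_monFracSpan hn hq hp)

def diffOps : Set ((ℂ → ℂ → ℂ) → (ℂ → ℂ → ℂ)) := {O1, O2, O3, O4, O5, O6}

lemma zOp_zero : zOp 0 = O1 := by
  funext f z w
  simp [zOp]

lemma zOp_one : zOp 1 = O2 := by
  funext f z w
  simp [zOp, O1, O2]

lemma zOp_mem_diffOps {k : ℕ} (hk : k ≤ 2) : zOp k ∈ diffOps := by
  interval_cases k
  · rw [zOp_zero]; exact Or.inl rfl
  · rw [zOp_one]; exact Or.inr (Or.inl rfl)
  · exact Or.inr (Or.inr (Or.inl rfl))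

lemma isLinearEndOn_of_mem_diffOps {T : (ℂ → ℂ → ℂ) → (ℂ → ℂ → ℂ)} (hT : T ∈ diffOps) :
    IsLinearEndOn T monFracSpan := by
  have h1 : IsLinearEndOn O1 monFracSpan := zOp_zero ▸ isLinearEndOn_zOp (by norm_num)
  have h2 : IsLinearEndOn O2 monFracSpan := zOp_one ▸ isLinearEndOn_zOp (by norm_num)
  have h3 : IsLinearEndOn O3 monFracSpan := isLinearEndOn_zOp le_rfl
  -- `O4`, `O5`, `O6` are definitionally `flip ∘ O1 ∘ flip`, `flip ∘ O2 ∘ flip`, `flip ∘ O3 ∘ flip`.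
  have hconj {U : (ℂ → ℂ → ℂ) → (ℂ → ℂ → ℂ)} (hU : IsLinearEndOn U monFracSpan) :
      IsLinearEndOn (flip ∘ U ∘ flip) monFracSpan :=
    isLinearEndOn_flip.comp (hU.comp isLinearEndOn_flip)
  rcases hT with rfl | rfl | rfl | rfl | rfl | rfl
  exacts [h1, h2, h3, hconj h1, hconj h2, hconj h3]

noncomputable def cyclicSpan : Submodule ℂ (ℂ → ℂ → ℂ) := orbitSpan ℂ diffOps (monFrac 0 0 1)

lemma monFrac_zero_zero_one_mem_monFracSpan : monFrac 0 0 1 ∈ monFracSpan :=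
  monFrac_mem_monFracSpan one_ne_zero zero_le_one zero_le_one

lemma cyclicSpan_le_monFracSpan : cyclicSpan ≤ monFracSpan :=
  orbitSpan_le (fun _ => isLinearEndOn_of_mem_diffOps) monFrac_zero_zero_one_mem_monFracSpan

lemma zOp_mem_cyclicSpan {k : ℕ} (hk : k ≤ 2) {g : ℂ → ℂ → ℂ} (hg : g ∈ cyclicSpan) :
    zOp k g ∈ cyclicSpan :=
  (isLinearEndOn_orbitSpan (fun _ => isLinearEndOn_of_mem_diffOps)
    monFrac_zero_zero_one_mem_monFracSpan (zOp_mem_diffOps hk)).mapsTo g hg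

lemma flip_mem_cyclicSpan {g : ℂ → ℂ → ℂ} (hg : g ∈ cyclicSpan) : flip g ∈ cyclicSpan := by
  refine map_mem_orbitSpan (fun _ => isLinearEndOn_of_mem_diffOps)
    monFrac_zero_zero_one_mem_monFracSpan flipₗ ?_ ?_ hg
  · rintro T (rfl | rfl | rfl | rfl | rfl | rfl)
    exacts [⟨O4, by simp [diffOps], fun _ => rfl⟩, ⟨O5, by simp [diffOps], fun _ => rfl⟩,
      ⟨O6, by simp [diffOps], fun _ => rfl⟩, ⟨O1, by simp [diffOps], fun _ => rfl⟩,
      ⟨O2, by simp [diffOps], fun _ => rfl⟩, ⟨O3, by simp [diffOps], fun _ => rfl⟩]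
  · change flip (monFrac 0 0 1) ∈ cyclicSpan
    rw [flip_monFrac]
    exact smul_mem _ _ mem_orbitSpan_self

lemma monFrac_mem_cyclicSpan_comm {p q n : ℕ} (h : monFrac p q n ∈ cyclicSpan) :
    monFrac q p n ∈ cyclicSpan := by
  have := smul_mem _ ((-1 : ℂ) ^ n) (flip_mem_cyclicSpan h)
  rwa [flip_monFrac, smul_smul, ← mul_pow, neg_one_mul, neg_neg, one_pow, one_smul] at this

lemma monFrac_succ_mem_cyclicSpan {k p q n : ℕ} (hk : k ≤ 2) (hn : n ≠ 0) (hp : p ≤ n)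
    (h : monFrac p q n ∈ cyclicSpan) (h' : (p : ℂ) • monFrac (p + k - 1) q n ∈ cyclicSpan) :
    monFrac (p + k) q (n + 1) ∈ cyclicSpan := by
  have hz := zOp_mem_cyclicSpan hk h
  rw [zOp_monFrac k hn hp] at hz
  have := smul_mem _ (n : ℂ)⁻¹ (sub_mem h' hz)
  rwa [sub_sub_cancel, smul_smul, inv_mul_cancel₀ (Nat.cast_ne_zero.2 hn), one_smul] at this

lemma monFrac_top_mem_cyclicSpan {q n : ℕ} (hn : n ≠ 0) (h : monFrac n q n ∈ cyclicSpan) :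
    monFrac (n + 1) (q + 1) (n + 1) ∈ cyclicSpan := by
  have hz := zOp_mem_cyclicSpan le_rfl h
  rw [zOp_two_monFrac_top q hn] at hz
  have := smul_mem _ (-(n : ℂ)⁻¹) hz
  rwa [smul_neg, smul_smul, neg_mul, inv_mul_cancel₀ (Nat.cast_ne_zero.2 hn), neg_smul, neg_neg,
    one_smul] at this

lemma monFrac_mem_cyclicSpan_of_succ {p q n : ℕ} (hn : n ≠ 0)
    (h₁ : monFrac (p + 1) q (n + 1) ∈ cyclicSpan)
    (h₂ : monFrac p (q + 1) (n + 1) ∈ cyclicSpan) :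
    monFrac p q n ∈ cyclicSpan :=
  monFrac_eq_sub p q hn ▸ sub_mem h₁ h₂

/-- Level `1` is reached by climbing from `1/(z - z̄)` to level `3` and descending with
`monFrac_eq_sub`. -/
lemma monFrac_mem_cyclicSpan_one {p q : ℕ} (hp : p ≤ 1) (hq : q ≤ 1) (hpq : (p, q) ≠ (1, 1)) :
    monFrac p q 1 ∈ cyclicSpan := by
  have h001 : monFrac 0 0 1 ∈ cyclicSpan := mem_orbitSpan_self
  have h202 : monFrac 2 0 2 ∈ cyclicSpan :=
    monFrac_succ_mem_cyclicSpan (k := 2) le_rfl one_ne_zero (Nat.zero_le _) h001 (by simp)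
  have h022 := monFrac_mem_cyclicSpan_comm h202
  have h123 : monFrac 1 2 3 ∈ cyclicSpan :=
    monFrac_succ_mem_cyclicSpan (k := 1) (by norm_num) two_ne_zero (Nat.zero_le _) h022
      (by simp)
  have h112 :=
    monFrac_mem_cyclicSpan_of_succ two_ne_zero (monFrac_mem_cyclicSpan_comm h123) h123
  have h101 := monFrac_mem_cyclicSpan_of_succ one_ne_zero h202 h112
  interval_cases p <;> interval_cases q
  exacts [h001, monFrac_mem_cyclicSpan_comm h101, h101, absurd rfl hpq]

lemma monFrac_mem_cyclicSpan_succ {n : ℕ} (hn : n ≠ 0)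
    (ih : ∀ p q, p ≤ n → q ≤ n → (p, q) ≠ (n, n) → monFrac p q n ∈ cyclicSpan)
    {p q : ℕ} (hp : p ≤ n + 1) (hq : q ≤ n + 1) (hpq : (p, q) ≠ (n + 1, n + 1)) :
    monFrac p q (n + 1) ∈ cyclicSpan := by
  wlog hqp : q ≤ p generalizing p q
  · exact monFrac_mem_cyclicSpan_comm (this hq hp (by grind) (by omega))
  simp only [ne_eq, Prod.mk.injEq] at hpq
  rcases p with _ | p
  · obtain rfl : q = 0 := by omega
    exact monFrac_succ_mem_cyclicSpan (k := 0) (by norm_num) hn (Nat.zero_le _)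
      (ih 0 0 (Nat.zero_le _) (Nat.zero_le _) (by simpa using hn.symm)) (by simp)
  by_cases htop : p = n ∧ q = n
  · obtain ⟨rfl, rfl⟩ := htop
    obtain ⟨m, rfl⟩ := Nat.exists_eq_succ_of_ne_zero hn
    exact monFrac_top_mem_cyclicSpan hn (ih _ m le_rfl (by omega) (by simp))
  · have h := ih p q (by omega) (by omega) (by simp only [ne_eq, Prod.mk.injEq]; omega)
    exact monFrac_succ_mem_cyclicSpan (k := 1) (by norm_num) hn (by omega) h
      (by simpa using smul_mem _ (p : ℂ) h)

lemma monFrac_mem_cyclicSpan {n : ℕ} (hn : n ≠ 0) {p q : ℕ} (hp : p ≤ n) (hq : q ≤ n)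
    (hpq : (p, q) ≠ (n, n)) : monFrac p q n ∈ cyclicSpan := by
  induction n, Nat.one_le_iff_ne_zero.2 hn using Nat.le_induction generalizing p q with
  | base => exact monFrac_mem_cyclicSpan_one hp hq hpq
  | succ n hn1 ih =>
    exact monFrac_mem_cyclicSpan_succ (by omega)
      (fun p q hp hq hpq => ih (by omega) hp hq hpq) hp hq hpq

/-- `1/(z - z̄)` is a cyclic vector: the span of its images under all finite
products of the six operators `∂_z, z∂_z, z²∂_z, ∂_z̄, z̄∂_z̄, z̄²∂_z̄`
equals `A = ∑_{n ≥ 1} A_n`. -/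
theorem stmt15 :
    Submodule.span ℂ
      {g : ℂ → ℂ → ℂ | ∃ L : List ((ℂ → ℂ → ℂ) → (ℂ → ℂ → ℂ)),
        (∀ o ∈ L, o ∈ ({O1, O2, O3, O4, O5, O6} :
            Set ((ℂ → ℂ → ℂ) → (ℂ → ℂ → ℂ)))) ∧
        g = L.foldr (fun o h => o h) (fun z w => 1 / (z - w))}
      = ⨆ n : ℕ, AnF (n + 1) := by
  have hseed : (fun z w => 1 / (z - w) : ℂ → ℂ → ℂ) = monFrac 0 0 1 := by
    funext z w
    simp [monFrac]
  change orbitSpan ℂ diffOps (fun z w => 1 / (z - w)) = _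
  rw [hseed]
  refine le_antisymm (cyclicSpan_le_monFracSpan.trans monFracSpan_eq_iSup.le)
    (iSup_le fun n => span_le.2 ?_)
  rintro _ ⟨p, q, hp, hq, hpq, rfl⟩
  exact monFrac_mem_cyclicSpan n.succ_ne_zero hp hq hpq
end
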